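/- arXiv:2407.10070 — 6 statements merged into one kernel-verified Lean document; each statement's English description precedes it below -/
import Mathlib

section
/- Let A be an n×n positive semidefinite real matrix with eigenvalues λ_1 ≥ ... ≥ λ_n, let k be a positive integer with k < n, and let λ̄ > 0 satisfy Tr(A(A+λ̄I)^{-1}) ≥ 2k. Then λ̄ ≤ (1/k) Σ_{i>k} λ_i(A). -/
open Matrix

theorem stmt1 {n : ℕ} (A : Matrix (Fin n) (Fin n) ℝ) (hA : A.PosSemidef)
    (e : Fin n → ℝ) (σ : Equiv.Perm (Fin n)) (he : e = hA.1.eigenvalues ∘ σ)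
    (hmono : Antitone e)
    (k : ℕ) (hk : 0 < k) (hkn : k < n)
    (lb : ℝ) (hlb : 0 < lb)
    (hdeff : (2 * k : ℝ) ≤ ∑ i, e i / (e i + lb)) :
    lb ≤ (1 / (k : ℝ)) * ∑ i ∈ Finset.univ.filter (fun i : Fin n => k ≤ (i : ℕ)), e i := by
  have henn : ∀ i, 0 ≤ e i := by
    intro i
    rw [he]
    exact hA.eigenvalues_nonneg (σ i)
  set S := Finset.univ.filter (fun i : Fin n => k ≤ (i : ℕ)) with hS
  set T := Finset.univ.filter (fun i : Fin n => (i : ℕ) < k) with hT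
  have hTcard : T.card = k := by
    have : T = Finset.Iio (⟨k, hkn⟩ : Fin n) := by
      ext i; simp [hT, Finset.mem_Iio, Fin.lt_def]
    rw [this, Fin.card_Iio]
  have hsplit : (∑ i, e i / (e i + lb)) =
      (∑ i ∈ T, e i / (e i + lb)) + (∑ i ∈ S, e i / (e i + lb)) := by
    rw [hS, hT, ← Finset.sum_filter_add_sum_filter_not Finset.univ
      (fun i : Fin n => (i : ℕ) < k) (fun i => e i / (e i + lb))]
    congr 1
    apply Finset.sum_congr _ (fun _ _ => rfl)
    ext i; simp [not_lt]
  have hpos : ∀ i : Fin n, 0 < e i + lb := fun i => by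
    have := henn i; linarith
  have hT1 : (∑ i ∈ T, e i / (e i + lb)) ≤ (k : ℝ) := by
    calc (∑ i ∈ T, e i / (e i + lb)) ≤ ∑ i ∈ T, 1 := by
          apply Finset.sum_le_sum
          intro i _
          rw [div_le_one (hpos i)]
          linarith [hlb]
      _ = (k : ℝ) := by simp [hTcard]
  have hSk : (k : ℝ) ≤ ∑ i ∈ S, e i / (e i + lb) := by
    rw [hsplit] at hdeff
    push_cast at hdeff ⊢
    linarith
  have hSub : (∑ i ∈ S, e i / (e i + lb)) ≤ (∑ i ∈ S, e i) / lb := by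
    rw [Finset.sum_div]
    apply Finset.sum_le_sum
    intro i _
    gcongr
    · exact henn i
    · linarith [henn i]
  have hk' : (0:ℝ) < (k:ℝ) := by exact_mod_cast hk
  rw [le_div_iff₀ hlb] at hSub
  rw [one_div, ← div_eq_inv_mul, le_div_iff₀ hk']
  nlinarith [hSk, hSub]
end

section
/- Let A be an n×n positive semidefinite matrix and λ > 0. If j ≥ 2·d_eff^λ(A) (where d_eff^λ(A) = Tr(A(A+λI)^{-1})), then the j-th largest eigenvalue of A satisfies λ_j(A) ≤ λ. -/
/-! If `e j > λ`, each of the `j + 1` eigenvalues `e 0 ≥ ⋯ ≥ e j` contributes more than `1/2` to the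
effective dimension `∑ e i / (e i + λ)`, and the remaining terms are nonnegative, so
`2 d_eff > j + 1`. -/

open Matrix

lemma half_lt_div_add_self {x lam : ℝ} (hlam : 0 < lam) (h : lam < x) :
    1 / 2 < x / (x + lam) := by
  rw [div_lt_div_iff₀ two_pos (by linarith)]
  linarith

lemma add_one_lt_two_mul_sum_div_add {n : ℕ} {e : Fin n → ℝ} (he : ∀ i, 0 ≤ e i)
    (hmono : Antitone e) {lam : ℝ} (hlam : 0 < lam) {j : Fin n} (hj : lam < e j) :
    (j : ℝ) + 1 < 2 * ∑ i, e i / (e i + lam) := by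
  have hsum : ∑ _i ∈ Finset.Iic j, (1 / 2 : ℝ) < ∑ i ∈ Finset.Iic j, e i / (e i + lam) :=
    Finset.sum_lt_sum_of_nonempty ⟨j, Finset.mem_Iic.mpr le_rfl⟩ fun i hi =>
      half_lt_div_add_self hlam (hj.trans_le (hmono (Finset.mem_Iic.mp hi)))
  have hsub : ∑ i ∈ Finset.Iic j, e i / (e i + lam) ≤ ∑ i, e i / (e i + lam) :=
    Finset.sum_le_sum_of_subset_of_nonneg (Finset.subset_univ _) fun i _ _ =>
      div_nonneg (he i) (by linarith [he i])
  rw [Finset.sum_const, Fin.card_Iic, nsmul_eq_mul] at hsum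
  push_cast at hsum
  linarith

theorem stmt2 {n : ℕ} (A : Matrix (Fin n) (Fin n) ℝ) (hA : A.PosSemidef)
    (e : Fin n → ℝ) (σ : Equiv.Perm (Fin n)) (he : e = hA.1.eigenvalues ∘ σ)
    (hmono : Antitone e)
    (lam : ℝ) (hlam : 0 < lam)
    (j : Fin n) (hj : 2 * ∑ i, e i / (e i + lam) ≤ (j : ℕ) + 1) :
    e j ≤ lam := by
  have he_nonneg : ∀ i, 0 ≤ e i := fun i => he ▸ hA.eigenvalues_nonneg _
  by_contra! hlt
  linarith [add_one_lt_two_mul_sum_div_add he_nonneg hmono hlam hlt]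
end

section
/- Let K be an n×n positive semidefinite matrix, λ > 0, and k an integer with deg_eff: k ≥ 2·d_eff^λ(K) and k < n. Define K_λ = K + λI and κ̄_{k:n} = (1/(n−k)) Σ_{i>k} λ_i(K_λ)/λ_min(K_λ). Then κ̄_{k:n} ≤ 2. -/
open Matrix

theorem stmt3 {n : ℕ} (K : Matrix (Fin n) (Fin n) ℝ) (hK : K.PosSemidef)
    (e : Fin n → ℝ) (σ : Equiv.Perm (Fin n)) (he : e = hK.1.eigenvalues ∘ σ)
    (hmono : Antitone e)
    (lam : ℝ) (hlam : 0 < lam)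
    (k : ℕ) (hkn : k < n)
    (hdeff : 2 * ∑ i, e i / (e i + lam) ≤ (k : ℝ)) :
    (1 / ((n : ℝ) - k)) *
      ∑ i ∈ Finset.univ.filter (fun i : Fin n => k ≤ (i : ℕ)),
        (e i + lam) /
          (e ⟨n - 1, Nat.sub_lt (lt_of_le_of_lt (Nat.zero_le k) hkn) one_pos⟩ + lam) ≤ 2 := by
  have he0 : ∀ i, 0 ≤ e i := by
    intro i; rw [he]; exact hK.eigenvalues_nonneg _
  set K' : Fin n := ⟨k, hkn⟩ with hK'
  -- key step: e ⟨k, hkn⟩ ≤ lam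
  have hkey : e K' ≤ lam := by
    by_contra h
    push_neg at h
    have hIic : Finset.univ.filter (fun i : Fin n => (i : ℕ) ≤ k) = Finset.Iic K' := by
      ext i; simp only [Finset.mem_filter, Finset.mem_univ, true_and, Finset.mem_Iic, Fin.le_def]; exact Iff.rfl
    have h1 : ∀ j ∈ Finset.Iic K', (1:ℝ)/2 < e j / (e j + lam) := by
      intro j hj
      have hje : lam < e j := lt_of_lt_of_le h (hmono (Finset.mem_Iic.mp hj))
      rw [div_lt_div_iff₀ (by norm_num) (by linarith)]
      linarith
    have hcard : (Finset.Iic K').card = k + 1 := by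
      rw [Fin.card_Iic]
    have hlt : ((k : ℝ) + 1) / 2 < ∑ j ∈ Finset.Iic K', e j / (e j + lam) := by
      have := Finset.sum_lt_sum_of_nonempty (s := Finset.Iic K')
        (f := fun _ => (1:ℝ)/2) (g := fun j => e j / (e j + lam))
        ⟨K', Finset.mem_Iic.mpr le_rfl⟩ h1
      rw [Finset.sum_const, hcard, nsmul_eq_mul] at this
      push_cast at this
      linarith
    have hle : ∑ j ∈ Finset.Iic K', e j / (e j + lam) ≤ ∑ i, e i / (e i + lam) := by
      apply Finset.sum_le_sum_of_subset_of_nonneg (Finset.subset_univ _)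
      intro i _ _
      exact div_nonneg (he0 i) (by linarith [he0 i])
    linarith
  set M : Fin n := ⟨n - 1, Nat.sub_lt (lt_of_le_of_lt (Nat.zero_le k) hkn) one_pos⟩ with hM
  have hMden : lam ≤ e M + lam := by linarith [he0 M]
  have hterm : ∀ i ∈ Finset.univ.filter (fun i : Fin n => k ≤ (i : ℕ)),
      (e i + lam) / (e M + lam) ≤ 2 := by
    intro i hi
    have hik : K' ≤ i := by
      exact Fin.le_def.mpr (Finset.mem_filter.mp hi).2
    have hei : e i ≤ lam := le_trans (hmono hik) hkey
    rw [div_le_iff₀ (by linarith [he0 M])]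
    nlinarith [he0 M]
  have hIci : Finset.univ.filter (fun i : Fin n => k ≤ (i : ℕ)) = Finset.Ici K' := by
    ext i; simp only [Finset.mem_filter, Finset.mem_univ, true_and, Finset.mem_Ici, Fin.le_def]; exact Iff.rfl
  have hcard2 : (Finset.univ.filter (fun i : Fin n => k ≤ (i : ℕ))).card = n - k := by
    rw [hIci, Fin.card_Ici]
  have hsum : ∑ i ∈ Finset.univ.filter (fun i : Fin n => k ≤ (i : ℕ)),
      (e i + lam) / (e M + lam) ≤ (n - k : ℕ) * 2 := by
    calc _ ≤ ((Finset.univ.filter (fun i : Fin n => k ≤ (i : ℕ))).card : ℝ) * 2 := by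
            simpa [nsmul_eq_mul] using
              Finset.sum_le_card_nsmul _ _ 2 hterm
      _ = (n - k : ℕ) * 2 := by rw [hcard2]
  have hnk : (0:ℝ) < (n:ℝ) - k := by
    have : (k:ℝ) < n := by exact_mod_cast hkn
    linarith
  have hcast : ((n - k : ℕ) : ℝ) = (n : ℝ) - k := by
    push_cast [Nat.cast_sub hkn.le]; ring
  rw [div_mul_eq_mul_div, one_mul, div_le_iff₀ hnk]
  rw [hcast] at hsum
  linarith
end

section
/- Let K_λ be an n×n symmetric positive definite matrix, B ⊆ [n] with selection matrix I_B, ρ > 0, and let K̂_BB be a symmetric PSD b×b matrix such that K̂_BB + ρI is positive definite, where K_BB + λI = I_B K_λ I_B^T. Define L = λ_max((K_BB+λI)^{1/2}(K̂_BB+ρI)^{-1}(K_BB+λI)^{1/2}), L̂ = max{1, L}, σ = λ_min of the same matrix, Π_B = K_λ^{1/2} I_B^T (K_BB+λI)^{-1} I_B K_λ^{1/2}, and Π̂ = (1/L̂) K_λ^{1/2} I_B^T (K̂_BB+ρI)^{-1} I_B K_λ^{1/2}. Then (σ/L̂)·Π_B ⪯ Π̂ ⪯ Π_B in the Loewner order.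 -/
open Matrix


lemma psd_smul' {m : Type*} [Fintype m] {A : Matrix m m ℝ} (hA : A.PosSemidef) {c : ℝ}
    (hc : 0 ≤ c) : (c • A).PosSemidef := by
  constructor
  · have := hA.1
    simp only [Matrix.IsHermitian, Matrix.conjTranspose_smul, star_trivial] at this ⊢
    rw [this]
  · intro x
    have h := mul_nonneg hc (hA.2 x)
    simp only [Finsupp.mul_sum, Matrix.smul_apply, smul_eq_mul, star_trivial] at h ⊢
    refine le_of_le_of_eq h ?_
    congr 1; ext i xi; congr 1; ext j xj; ring

lemma smul_one_sub_psd {m : Type*} [Fintype m] [DecidableEq m] {M : Matrix m m ℝ}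
    (hM : M.IsHermitian) {c : ℝ} (h : ∀ i, hM.eigenvalues i ≤ c) :
    (c • (1 : Matrix m m ℝ) - M).PosSemidef := by
  have hU : (hM.eigenvectorUnitary : Matrix m m ℝ) * star (hM.eigenvectorUnitary : Matrix m m ℝ)
      = 1 := (Matrix.mem_unitaryGroup_iff).mp hM.eigenvectorUnitary.2
  have hd : Matrix.PosSemidef (Matrix.diagonal (fun i => c - hM.eigenvalues i)) :=
    posSemidef_diagonal_iff.mpr (fun i => sub_nonneg.2 (h i))
  have key := hd.mul_mul_conjTranspose_same (hM.eigenvectorUnitary : Matrix m m ℝ)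
  have hdiag : Matrix.diagonal (fun i => c - hM.eigenvalues i)
      = c • (1 : Matrix m m ℝ) - Matrix.diagonal (RCLike.ofReal ∘ hM.eigenvalues) := by
    ext i j
    by_cases hij : i = j <;> simp [Matrix.diagonal, hij, Matrix.one_apply]
  have heq : (hM.eigenvectorUnitary : Matrix m m ℝ)
        * Matrix.diagonal (fun i => c - hM.eigenvalues i)
        * (hM.eigenvectorUnitary : Matrix m m ℝ)ᴴ
      = c • (1 : Matrix m m ℝ) - M := by
    rw [hdiag, Matrix.mul_sub, Matrix.sub_mul, Matrix.mul_smul, Matrix.mul_one, Matrix.smul_mul,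
      ← Matrix.star_eq_conjTranspose, hU]
    conv_rhs => rw [hM.spectral_theorem]
    rfl
  rw [← heq]
  exact key

lemma sub_smul_one_psd {m : Type*} [Fintype m] [DecidableEq m] {M : Matrix m m ℝ}
    (hM : M.IsHermitian) {c : ℝ} (h : ∀ i, c ≤ hM.eigenvalues i) :
    (M - c • (1 : Matrix m m ℝ)).PosSemidef := by
  have hU : (hM.eigenvectorUnitary : Matrix m m ℝ) * star (hM.eigenvectorUnitary : Matrix m m ℝ)
      = 1 := (Matrix.mem_unitaryGroup_iff).mp hM.eigenvectorUnitary.2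
  have hd : Matrix.PosSemidef (Matrix.diagonal (fun i => hM.eigenvalues i - c)) :=
    posSemidef_diagonal_iff.mpr (fun i => sub_nonneg.2 (h i))
  have key := hd.mul_mul_conjTranspose_same (hM.eigenvectorUnitary : Matrix m m ℝ)
  have hdiag : Matrix.diagonal (fun i => hM.eigenvalues i - c)
      = Matrix.diagonal (RCLike.ofReal ∘ hM.eigenvalues) - c • (1 : Matrix m m ℝ) := by
    ext i j
    by_cases hij : i = j <;> simp [Matrix.diagonal, hij, Matrix.one_apply]
  have heq : (hM.eigenvectorUnitary : Matrix m m ℝ)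
        * Matrix.diagonal (fun i => hM.eigenvalues i - c)
        * (hM.eigenvectorUnitary : Matrix m m ℝ)ᴴ
      = M - c • (1 : Matrix m m ℝ) := by
    rw [hdiag, Matrix.mul_sub, Matrix.sub_mul, Matrix.mul_smul, Matrix.mul_one, Matrix.smul_mul,
      ← Matrix.star_eq_conjTranspose, hU]
    conv_rhs => rw [hM.spectral_theorem]
    rfl
  rw [← heq]
  exact key

theorem stmt5 {n b : ℕ}
    (Kl : Matrix (Fin n) (Fin n) ℝ) (hKl : Kl.PosDef)
    (f : Fin b → Fin n) (hf : Function.Injective f)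
    (IB : Matrix (Fin b) (Fin n) ℝ)
    (hIB : IB = Matrix.of fun i j => if f i = j then (1 : ℝ) else 0)
    (hKBB : (IB * Kl * IBᵀ).PosDef)
    (Khat : Matrix (Fin b) (Fin b) ℝ) (hKhat : Khat.PosSemidef)
    (ρ : ℝ) (hρ : 0 < ρ)
    (hP : (Khat + ρ • (1 : Matrix (Fin b) (Fin b) ℝ)).PosDef)
    (S : Matrix (Fin b) (Fin b) ℝ) (hS : S.PosSemidef) (hS2 : S * S = IB * Kl * IBᵀ)
    (R : Matrix (Fin n) (Fin n) ℝ) (hR : R.PosSemidef) (hR2 : R * R = Kl)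
    (hM : (S * (Khat + ρ • (1 : Matrix (Fin b) (Fin b) ℝ))⁻¹ * S).IsHermitian)
    (L σmin Lhat : ℝ)
    (hL : L = ⨆ i, hM.eigenvalues i)
    (hσ : σmin = ⨅ i, hM.eigenvalues i)
    (hLhat : Lhat = max 1 L) :
    ((Lhat⁻¹ • (R * IBᵀ * (Khat + ρ • (1 : Matrix (Fin b) (Fin b) ℝ))⁻¹ * IB * R)) -
        (σmin / Lhat) • (R * IBᵀ * (IB * Kl * IBᵀ)⁻¹ * IB * R)).PosSemidef ∧
      ((R * IBᵀ * (IB * Kl * IBᵀ)⁻¹ * IB * R) -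
        Lhat⁻¹ • (R * IBᵀ * (Khat + ρ • (1 : Matrix (Fin b) (Fin b) ℝ))⁻¹ * IB * R)).PosSemidef := by
  set Q : Matrix (Fin b) (Fin b) ℝ := (Khat + ρ • (1 : Matrix (Fin b) (Fin b) ℝ))⁻¹ with hQdef
  -- basic facts
  have hL1 : (0:ℝ) < Lhat := lt_of_lt_of_le one_pos (hLhat ▸ le_max_left 1 L)
  have hSdet : IsUnit S.det := by
    have h1 : S.det * S.det = (IB * Kl * IBᵀ).det := by rw [← det_mul, hS2]
    have h2 : (IB * Kl * IBᵀ).det ≠ 0 := ne_of_gt hKBB.det_pos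
    refine isUnit_iff_ne_zero.mpr fun h => h2 ?_
    rw [← h1, h, mul_zero]
  have hSS : S * S⁻¹ = 1 := Matrix.mul_nonsing_inv S hSdet
  have hSS' : S⁻¹ * S = 1 := Matrix.nonsing_inv_mul S hSdet
  have hSinvH : (S⁻¹)ᴴ = S⁻¹ := by rw [Matrix.conjTranspose_nonsing_inv, hS.1.eq]
  have hAinv : (IB * Kl * IBᵀ)⁻¹ = S⁻¹ * S⁻¹ := by rw [← hS2, Matrix.mul_inv_rev]
  -- eigenvalue bounds
  have hub : ∀ i, hM.eigenvalues i ≤ Lhat := fun i => by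
    rw [hLhat]
    exact le_trans (hL ▸ le_ciSup (Set.Finite.bddAbove (Set.finite_range _)) i) (le_max_right 1 L)
  have hlb : ∀ i, σmin ≤ hM.eigenvalues i := fun i =>
    hσ ▸ ciInf_le (Set.Finite.bddBelow (Set.finite_range _)) i
  have hX1 : (Lhat • (1 : Matrix (Fin b) (Fin b) ℝ) - S * Q * S).PosSemidef :=
    smul_one_sub_psd hM hub
  have hX2 : (S * Q * S - σmin • (1 : Matrix (Fin b) (Fin b) ℝ)).PosSemidef :=
    sub_smul_one_psd hM hlb
  -- conjugate by S⁻¹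
  have hconj : ∀ (X : Matrix (Fin b) (Fin b) ℝ), S⁻¹ * (S * Q * S) * (S⁻¹)ᴴ = Q := by
    intro _
    rw [hSinvH]
    have e1 : S⁻¹ * (S * Q * S) * S⁻¹ = S⁻¹ * S * (Q * (S * S⁻¹)) := by
      simp only [Matrix.mul_assoc]
    rw [e1, hSS', hSS, Matrix.one_mul, Matrix.mul_one]
  have hmid : S⁻¹ * (S * Q * S) * (S⁻¹)ᴴ = Q := hconj 0
  have hY1 : (Lhat • (S⁻¹ * S⁻¹) - Q).PosSemidef := by
    have := hX1.mul_mul_conjTranspose_same S⁻¹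
    rwa [Matrix.mul_sub, Matrix.sub_mul, hmid, Matrix.mul_smul, Matrix.mul_one, Matrix.smul_mul,
      hSinvH] at this
  have hY2 : (Q - σmin • (S⁻¹ * S⁻¹)).PosSemidef := by
    have := hX2.mul_mul_conjTranspose_same S⁻¹
    rwa [Matrix.mul_sub, Matrix.sub_mul, hmid, Matrix.mul_smul, Matrix.mul_one, Matrix.smul_mul,
      hSinvH] at this
  -- conjugate by R * IBᵀ
  have hTH : (R * IBᵀ)ᴴ = IB * R := by
    rw [Matrix.conjTranspose_mul, hR.1.eq]
    congr 1
  have hZ1 := hY1.mul_mul_conjTranspose_same (R * IBᵀ)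
  have hZ2 := hY2.mul_mul_conjTranspose_same (R * IBᵀ)
  rw [hTH] at hZ1 hZ2
  constructor
  · have key : Lhat⁻¹ • (R * IBᵀ * Q * IB * R) -
        (σmin / Lhat) • (R * IBᵀ * (IB * Kl * IBᵀ)⁻¹ * IB * R)
        = Lhat⁻¹ • (R * IBᵀ * (Q - σmin • (S⁻¹ * S⁻¹)) * (IB * R)) := by
      rw [hAinv, div_eq_mul_inv, mul_comm]
      simp only [Matrix.mul_sub, Matrix.sub_mul, Matrix.mul_smul, Matrix.smul_mul, smul_sub,
        smul_smul, Matrix.mul_assoc]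
    rw [key]
    exact psd_smul' hZ2 (inv_nonneg.mpr hL1.le)
  · have key : (R * IBᵀ * (IB * Kl * IBᵀ)⁻¹ * IB * R) - Lhat⁻¹ • (R * IBᵀ * Q * IB * R)
        = Lhat⁻¹ • (R * IBᵀ * (Lhat • (S⁻¹ * S⁻¹) - Q) * (IB * R)) := by
      rw [hAinv]
      simp only [Matrix.mul_sub, Matrix.sub_mul, Matrix.mul_smul, Matrix.smul_mul, smul_sub,
        smul_smul, inv_mul_cancel₀ hL1.ne', one_smul, Matrix.mul_assoc]
    rw [key]
    exact psd_smul' hZ1 (inv_nonneg.mpr hL1.le)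
end

section
/- Let Π be a symmetric matrix with 0 ⪯ Π ⪯ I (an 'approximate projection'), let K_λ be symmetric positive definite, and let w, w* satisfy the update w⁺ = w − K_λ^{-1/2} Π K_λ^{1/2}(w − w*). Then ‖w⁺ − w*‖²_{K_λ} ≤ (w−w*)^T K_λ^{1/2}(I − Π) K_λ^{1/2}(w−w*). In particular, if λ_min(Π) ≥ μ̂ > 0 then ‖w⁺ − w*‖²_{K_λ} ≤ (1 − μ̂)‖w − w*‖²_{K_λ}. -/
open Matrix

private lemma dot_sym {n : ℕ} (M : Matrix (Fin n) (Fin n) ℝ) (hM : Mᵀ = M)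
    (x y : Fin n → ℝ) : (M.mulVec x) ⬝ᵥ y = x ⬝ᵥ M.mulVec y := by
  rw [dotProduct_mulVec, ← mulVec_transpose, hM]

private lemma quad_conj {n : ℕ} (A B : Matrix (Fin n) (Fin n) ℝ) (hA : Aᵀ = A)
    (x : Fin n → ℝ) :
    x ⬝ᵥ (A * B * A).mulVec x = (A.mulVec x) ⬝ᵥ B.mulVec (A.mulVec x) := by
  rw [← mulVec_mulVec, ← mulVec_mulVec, dotProduct_mulVec, ← mulVec_transpose, hA,
    dot_sym A hA]

private lemma psd_nonneg {n : ℕ} {M : Matrix (Fin n) (Fin n) ℝ} (hM : M.PosSemidef)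
    (x : Fin n → ℝ) : 0 ≤ x ⬝ᵥ M.mulVec x := by
  have := hM.dotProduct_mulVec_nonneg x
  simpa using this

private lemma sub_smul_one_psd_s7 {n : ℕ} {Pi : Matrix (Fin n) (Fin n) ℝ}
    (hPi0 : Pi.PosSemidef) (μhat : ℝ) (hev : ∀ i, μhat ≤ hPi0.1.eigenvalues i) :
    (Pi - μhat • (1 : Matrix (Fin n) (Fin n) ℝ)).PosSemidef := by
  have hsp := hPi0.1.spectral_theorem
  set U : Matrix (Fin n) (Fin n) ℝ := (hPi0.1.eigenvectorUnitary : Matrix (Fin n) (Fin n) ℝ)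
    with hUdef
  have hUU : U * star U = 1 :=
    (Matrix.mem_unitaryGroup_iff).mp hPi0.1.eigenvectorUnitary.2
  have hdiag : diagonal (RCLike.ofReal ∘ hPi0.1.eigenvalues) =
      diagonal (hPi0.1.eigenvalues) := by
    rw [RCLike.ofReal_real_eq_id]; rfl
  have key : Pi - μhat • (1 : Matrix (Fin n) (Fin n) ℝ)
      = U * diagonal (fun i => hPi0.1.eigenvalues i - μhat) * Uᴴ := by
    conv_lhs => rw [hsp, ← hUU]
    rw [Unitary.conjStarAlgAut_apply, hdiag, ← Matrix.star_eq_conjTranspose]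
    have h1 : diagonal (fun i => hPi0.1.eigenvalues i - μhat)
        = diagonal hPi0.1.eigenvalues - μhat • (1 : Matrix (Fin n) (Fin n) ℝ) := by
      ext i j
      by_cases h : i = j <;>
        simp [Matrix.diagonal_apply, h, Matrix.one_apply, Matrix.sub_apply]
    rw [h1, Matrix.mul_sub, Matrix.mul_smul, mul_one, Matrix.sub_mul, Matrix.smul_mul]
  rw [key]
  exact (posSemidef_diagonal_iff.mpr fun i => sub_nonneg.mpr (hev i)).mul_mul_conjTranspose_same U

theorem stmt7 {n : ℕ} (Kl Pi : Matrix (Fin n) (Fin n) ℝ)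
    (hKl : Kl.PosDef)
    (hPi0 : Pi.PosSemidef) (hPi1 : ((1 : Matrix (Fin n) (Fin n) ℝ) - Pi).PosSemidef)
    (R : Matrix (Fin n) (Fin n) ℝ) (hR : R.PosDef) (hR2 : R * R = Kl)
    (w ws wplus : Fin n → ℝ)
    (hupd : wplus = w - (R⁻¹ * Pi * R).mulVec (w - ws)) :
    ((wplus - ws) ⬝ᵥ Kl.mulVec (wplus - ws) ≤
        (w - ws) ⬝ᵥ (R * ((1 : Matrix (Fin n) (Fin n) ℝ) - Pi) * R).mulVec (w - ws)) ∧
      ∀ μhat : ℝ, 0 < μhat → (∀ i, μhat ≤ hPi0.1.eigenvalues i) →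
        (wplus - ws) ⬝ᵥ Kl.mulVec (wplus - ws) ≤
          (1 - μhat) * ((w - ws) ⬝ᵥ Kl.mulVec (w - ws)) := by
  classical
  set v : Fin n → ℝ := w - ws with hv
  have hRsymm : Rᵀ = R := hR.1
  have hPisymm : Piᵀ = Pi := hPi0.1
  have hQsymm : ((1 : Matrix (Fin n) (Fin n) ℝ) - Pi)ᵀ = (1 : Matrix (Fin n) (Fin n) ℝ) - Pi := by
    rw [transpose_sub, transpose_one, hPisymm]
  have hRunit : IsUnit R.det := isUnit_iff_ne_zero.mpr hR.det_pos.ne'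
  have hwp : wplus - ws = v - (R⁻¹ * Pi * R).mulVec v := by
    rw [hupd, hv]; abel
  set u : Fin n → ℝ := R.mulVec v with hu
  have hRu : R.mulVec (wplus - ws) = ((1 : Matrix (Fin n) (Fin n) ℝ) - Pi).mulVec u := by
    rw [hwp, mulVec_sub, mulVec_mulVec, ← mul_assoc, ← mul_assoc,
      Matrix.mul_nonsing_inv R hRunit, one_mul, sub_mulVec, one_mulVec, hu, mulVec_mulVec]
  have hsq : ∀ x : Fin n → ℝ, x ⬝ᵥ Kl.mulVec x = (R.mulVec x) ⬝ᵥ (R.mulVec x) := by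
    intro x
    rw [← hR2, ← mulVec_mulVec, dot_sym R hRsymm]
  have hLHS : (wplus - ws) ⬝ᵥ Kl.mulVec (wplus - ws)
      = u ⬝ᵥ (((1 : Matrix (Fin n) (Fin n) ℝ) - Pi) *
          ((1 : Matrix (Fin n) (Fin n) ℝ) - Pi)).mulVec u := by
    rw [hsq, hRu, dot_sym _ hQsymm, mulVec_mulVec]
  have hRHS : v ⬝ᵥ (R * ((1 : Matrix (Fin n) (Fin n) ℝ) - Pi) * R).mulVec v
      = u ⬝ᵥ (((1 : Matrix (Fin n) (Fin n) ℝ) - Pi)).mulVec u := by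
    rw [quad_conj _ _ hRsymm]
  have hKlquad : v ⬝ᵥ Kl.mulVec v = u ⬝ᵥ u := hsq v
  -- key PSD fact: (1-Pi) - (1-Pi)^2 is PSD
  open scoped MatrixOrder in
  obtain ⟨S, hSH, hS⟩ : ∃ S : Matrix (Fin n) (Fin n) ℝ, Sᴴ = S ∧ S * S = Pi :=
    ⟨CFC.sqrt Pi, (CFC.sqrt_nonneg Pi).posSemidef.1, CFC.sqrt_mul_sqrt_self Pi hPi0.nonneg⟩
  have hcomm : Pi * S = S * Pi := by rw [← hS, mul_assoc]
  have hgap : (((1 : Matrix (Fin n) (Fin n) ℝ) - Pi) -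
      ((1 : Matrix (Fin n) (Fin n) ℝ) - Pi) * ((1 : Matrix (Fin n) (Fin n) ℝ) - Pi)).PosSemidef := by
    have heq : (((1 : Matrix (Fin n) (Fin n) ℝ) - Pi) -
        ((1 : Matrix (Fin n) (Fin n) ℝ) - Pi) * ((1 : Matrix (Fin n) (Fin n) ℝ) - Pi))
        = Sᴴ * ((1 : Matrix (Fin n) (Fin n) ℝ) - Pi) * S := by
      rw [hSH]
      have h3 : S * ((1 : Matrix (Fin n) (Fin n) ℝ) - Pi) * S = S * S - S * (Pi * S) := by
        noncomm_ring
      rw [h3, hcomm, ← mul_assoc, hS]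
      noncomm_ring
    rw [heq]
    exact hPi1.conjTranspose_mul_mul_same S
  have part1 : (wplus - ws) ⬝ᵥ Kl.mulVec (wplus - ws) ≤
      v ⬝ᵥ (R * ((1 : Matrix (Fin n) (Fin n) ℝ) - Pi) * R).mulVec v := by
    rw [hLHS, hRHS]
    have := psd_nonneg hgap u
    rw [sub_mulVec, dotProduct_sub] at this
    linarith
  refine ⟨part1, fun μhat hμ hev => ?_⟩
  have hPiμ : (Pi - μhat • (1 : Matrix (Fin n) (Fin n) ℝ)).PosSemidef :=
    sub_smul_one_psd_s7 hPi0 μhat hev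
  have h2 : u ⬝ᵥ (((1 : Matrix (Fin n) (Fin n) ℝ) - Pi)).mulVec u ≤ (1 - μhat) * (u ⬝ᵥ u) := by
    have h4 := psd_nonneg hPiμ u
    rw [sub_mulVec, dotProduct_sub, smul_mulVec, one_mulVec, dotProduct_smul,
      smul_eq_mul] at h4
    rw [sub_mulVec, dotProduct_sub, one_mulVec]
    nlinarith [h4]
  calc (wplus - ws) ⬝ᵥ Kl.mulVec (wplus - ws)
      ≤ v ⬝ᵥ (R * ((1 : Matrix (Fin n) (Fin n) ℝ) - Pi) * R).mulVec v := part1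
    _ = u ⬝ᵥ (((1 : Matrix (Fin n) (Fin n) ℝ) - Pi)).mulVec u := hRHS
    _ ≤ (1 - μhat) * (u ⬝ᵥ u) := h2
    _ = (1 - μhat) * (v ⬝ᵥ Kl.mulVec v) := by rw [hKlquad]
end

section
/- Let X and Y be random symmetric PSD matrices on the same probability space, let E be an event with Pr(E) ≥ 1 − μ/2 where μ = λ_min(E[Y]) > 0, and suppose that on E, (λ/(2ρ))·Y ⪯ X ⪯ Y almost surely, and 0 ⪯ Y ⪯ I almost surely. Then E[X] ⪰ (λ/(4ρ))·E[Y]. -/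
open Matrix MeasureTheory

lemma rayleigh_lb' {n : ℕ} {M : Matrix (Fin n) (Fin n) ℝ} (hM : M.IsHermitian)
    (x : Fin n → ℝ) : (⨅ i, hM.eigenvalues i) * (x ⬝ᵥ x) ≤ x ⬝ᵥ (M *ᵥ x) := by
  rcases Nat.eq_zero_or_pos n with h0 | hpos
  · subst h0
    simp [dotProduct, mulVec]
  · have : Nonempty (Fin n) := ⟨⟨0, hpos⟩⟩
    set μ := ⨅ i, hM.eigenvalues i with hμ
    have hpsd : (M - μ • 1).PosSemidef := by
      have hdecomp : M - μ • (1 : Matrix (Fin n) (Fin n) ℝ) =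
          (hM.eigenvectorUnitary : Matrix (Fin n) (Fin n) ℝ) *
            diagonal (fun i => hM.eigenvalues i - μ) *
            star (hM.eigenvectorUnitary : Matrix (Fin n) (Fin n) ℝ) := by
        have hU : (hM.eigenvectorUnitary : Matrix (Fin n) (Fin n) ℝ) *
            star (hM.eigenvectorUnitary : Matrix (Fin n) (Fin n) ℝ) = 1 :=
          (Matrix.mem_unitaryGroup_iff).mp hM.eigenvectorUnitary.2
        have hdiag : diagonal (fun i => hM.eigenvalues i - μ) =
            diagonal (RCLike.ofReal ∘ hM.eigenvalues) - μ • (1 : Matrix (Fin n) (Fin n) ℝ) := by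
          ext i j
          by_cases h : i = j <;>
            simp [h, Matrix.diagonal_apply, Matrix.one_apply, Matrix.sub_apply]
        rw [hdiag, Matrix.mul_sub, Matrix.sub_mul, ← Unitary.conjStarAlgAut_apply (S := ℝ), ← hM.spectral_theorem]
        congr 1
        rw [Matrix.mul_smul, Matrix.mul_one, Matrix.smul_mul, hU]
      rw [hdecomp]
      refine (posSemidef_diagonal_iff.mpr fun i => ?_).mul_mul_conjTranspose_same _
      have : μ ≤ hM.eigenvalues i := ciInf_le (Finite.bddBelow_range _) i
      linarith
    have h := hpsd.dotProduct_mulVec_nonneg x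
    simp only [star_trivial, sub_mulVec, dotProduct_sub, smul_mulVec, one_mulVec,
      dotProduct_smul, smul_eq_mul] at h
    linarith

lemma quad_int' {Ω : Type*} [MeasurableSpace Ω] (ℙ : Measure Ω) {n : ℕ}
    (M : Ω → Matrix (Fin n) (Fin n) ℝ) (hint : ∀ i j, Integrable (fun ω => M ω i j) ℙ)
    (x : Fin n → ℝ) :
    x ⬝ᵥ ((Matrix.of fun i j => ∫ ω, M ω i j ∂ℙ : Matrix (Fin n) (Fin n) ℝ) *ᵥ x)
      = ∫ ω, x ⬝ᵥ (M ω *ᵥ x) ∂ℙ := by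
  have h1 : ∀ i, Integrable (fun ω => x i * ∑ j, M ω i j * x j) ℙ := fun i =>
    (integrable_finset_sum _ fun j _ => (hint i j).mul_const (x j)).const_mul (x i)
  simp only [dotProduct, mulVec, Matrix.of_apply]
  rw [integral_finset_sum _ (fun i _ => h1 i)]
  refine Finset.sum_congr rfl fun i _ => ?_
  rw [MeasureTheory.integral_const_mul]
  congr 1
  rw [integral_finset_sum _ (fun j _ => (hint i j).mul_const (x j))]
  exact Finset.sum_congr rfl fun j _ => (MeasureTheory.integral_mul_const _ _).symm

lemma quad_integrable' {Ω : Type*} [MeasurableSpace Ω] (ℙ : Measure Ω) {n : ℕ}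
    (M : Ω → Matrix (Fin n) (Fin n) ℝ) (hint : ∀ i j, Integrable (fun ω => M ω i j) ℙ)
    (x : Fin n → ℝ) : Integrable (fun ω => x ⬝ᵥ (M ω *ᵥ x)) ℙ := by
  simp only [dotProduct, mulVec]
  exact integrable_finset_sum _ fun i _ =>
    (integrable_finset_sum _ fun j _ => (hint i j).mul_const (x j)).const_mul (x i)

theorem stmt8 {Ω : Type*} [MeasurableSpace Ω] (ℙ : Measure Ω) [IsProbabilityMeasure ℙ]
    {n : ℕ} (X Y : Ω → Matrix (Fin n) (Fin n) ℝ)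
    (hXint : ∀ i j, Integrable (fun ω => X ω i j) ℙ)
    (hYint : ∀ i j, Integrable (fun ω => Y ω i j) ℙ)
    (lam ρ : ℝ) (hlam : 0 < lam) (hlamρ : lam ≤ 2 * ρ)
    (E : Set Ω) (hE : MeasurableSet E)
    (hEY : (Matrix.of fun i j => ∫ ω, Y ω i j ∂ℙ : Matrix (Fin n) (Fin n) ℝ).IsHermitian)
    (μ : ℝ) (hμ : μ = ⨅ i, hEY.eigenvalues i) (hμpos : 0 < μ)
    (hPE : ENNReal.ofReal (1 - μ / 2) ≤ ℙ E)
    (hXY : ∀ᵐ ω ∂ℙ, ω ∈ E →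
      ((X ω - (lam / (2 * ρ)) • Y ω).PosSemidef ∧ (Y ω - X ω).PosSemidef))
    (hYbnd : ∀ᵐ ω ∂ℙ, (Y ω).PosSemidef ∧ ((1 : Matrix (Fin n) (Fin n) ℝ) - Y ω).PosSemidef)
    (hXpsd : ∀ᵐ ω ∂ℙ, (X ω).PosSemidef) :
    ((Matrix.of fun i j => ∫ ω, X ω i j ∂ℙ : Matrix (Fin n) (Fin n) ℝ) -
      (lam / (4 * ρ)) • (Matrix.of fun i j => ∫ ω, Y ω i j ∂ℙ :
        Matrix (Fin n) (Fin n) ℝ)).PosSemidef := by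
  have hρ : 0 < ρ := by linarith
  have hEX : (Matrix.of fun i j => ∫ ω, X ω i j ∂ℙ : Matrix (Fin n) (Fin n) ℝ).IsHermitian := by
    apply Matrix.ext
    intro i j
    simp only [conjTranspose_apply, Matrix.of_apply, star_trivial]
    apply integral_congr_ae
    filter_upwards [hXpsd] with ω h
    have h2 := h.1.apply i j
    simpa using h2
  have hEYs : ((lam / (4 * ρ)) • (Matrix.of fun i j => ∫ ω, Y ω i j ∂ℙ :
      Matrix (Fin n) (Fin n) ℝ)).IsHermitian := by
    show _ᴴ = _
    rw [Matrix.conjTranspose_smul, hEY.eq, star_trivial]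
  refine PosSemidef.of_dotProduct_mulVec_nonneg (hEX.sub hEYs) fun x => ?_
  simp only [star_trivial, sub_mulVec, dotProduct_sub, smul_mulVec, dotProduct_smul,
    smul_eq_mul, sub_nonneg]
  set g : Ω → ℝ := fun ω => x ⬝ᵥ (Y ω *ᵥ x) with hg
  set f : Ω → ℝ := fun ω => x ⬝ᵥ (X ω *ᵥ x) with hf
  have hgint : Integrable g ℙ := quad_integrable' ℙ Y hYint x
  have hfint : Integrable f ℙ := quad_integrable' ℙ X hXint x
  have hQX := quad_int' ℙ X hXint x
  have hQY := quad_int' ℙ Y hYint x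
  rw [hQX, hQY]
  have hxx : (0:ℝ) ≤ x ⬝ᵥ x :=
    Finset.sum_nonneg fun i _ => mul_self_nonneg _
  -- Rayleigh: μ * (x ⬝ᵥ x) ≤ ∫ g
  have hray : μ * (x ⬝ᵥ x) ≤ ∫ ω, g ω ∂ℙ := by
    rw [← hQY, hμ]
    exact rayleigh_lb' hEY x
  -- g nonneg and bounded by x ⬝ᵥ x a.e.
  have hgbd : ∀ᵐ ω ∂ℙ, 0 ≤ g ω ∧ g ω ≤ x ⬝ᵥ x := by
    filter_upwards [hYbnd] with ω h
    constructor
    · simpa using h.1.dotProduct_mulVec_nonneg x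
    · have := h.2.dotProduct_mulVec_nonneg x
      simp only [star_trivial, sub_mulVec, dotProduct_sub, one_mulVec] at this
      linarith
  -- probability of complement
  have hcompl : (ℙ Eᶜ).toReal ≤ μ / 2 := by
    have h1 : ℙ Eᶜ = 1 - ℙ E := prob_compl_eq_one_sub hE
    by_cases hcase : 1 - μ / 2 ≤ 0
    · have := ENNReal.toReal_mono (by simp) (prob_le_one (μ := ℙ) (s := Eᶜ))
      simp only [ENNReal.toReal_one] at this
      linarith
    · push_neg at hcase
      have h2 : ℙ Eᶜ ≤ ENNReal.ofReal (μ / 2) := by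
        rw [h1]
        calc 1 - ℙ E ≤ 1 - ENNReal.ofReal (1 - μ / 2) := tsub_le_tsub_left hPE 1
          _ = ENNReal.ofReal 1 - ENNReal.ofReal (1 - μ / 2) := by rw [ENNReal.ofReal_one]
          _ = ENNReal.ofReal (1 - (1 - μ / 2)) := (ENNReal.ofReal_sub _ (by linarith)).symm
          _ = ENNReal.ofReal (μ / 2) := by ring_nf
      exact ENNReal.toReal_le_of_le_ofReal (by positivity) h2
  -- set integral bound on complement
  have hcint : ∫ ω in Eᶜ, g ω ∂ℙ ≤ μ / 2 * (x ⬝ᵥ x) := by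
    calc ∫ ω in Eᶜ, g ω ∂ℙ ≤ ∫ _ω in Eᶜ, (x ⬝ᵥ x) ∂ℙ :=
          setIntegral_mono_ae hgint.integrableOn (integrable_const _).integrableOn
            (by filter_upwards [hgbd] with ω h using h.2)
      _ = (ℙ Eᶜ).toReal • (x ⬝ᵥ x) := setIntegral_const _
      _ ≤ μ / 2 * (x ⬝ᵥ x) := by
          rw [smul_eq_mul]
          exact mul_le_mul_of_nonneg_right hcompl hxx
  -- E-part of the integral of g
  have hsplit : ∫ ω in E, g ω ∂ℙ + ∫ ω in Eᶜ, g ω ∂ℙ = ∫ ω, g ω ∂ℙ :=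
    integral_add_compl hE hgint
  have hEhalf : (1 / 2) * ∫ ω, g ω ∂ℙ ≤ ∫ ω in E, g ω ∂ℙ := by
    have : μ / 2 * (x ⬝ᵥ x) ≤ (1 / 2) * ∫ ω, g ω ∂ℙ := by linarith
    linarith
  -- lower bound on ∫ f
  have hc' : (0:ℝ) ≤ lam / (2 * ρ) := by positivity
  have hind : ∀ᵐ ω ∂ℙ, E.indicator (fun ω => lam / (2 * ρ) * g ω) ω ≤ f ω := by
    filter_upwards [hXY, hXpsd] with ω h1 h2
    by_cases hω : ω ∈ E
    · rw [Set.indicator_of_mem hω]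
      have := (h1 hω).1.dotProduct_mulVec_nonneg x
      simp only [star_trivial, sub_mulVec, dotProduct_sub, smul_mulVec,
        dotProduct_smul, smul_eq_mul] at this
      linarith
    · rw [Set.indicator_of_notMem hω]
      simpa using h2.dotProduct_mulVec_nonneg x
  have hfa : lam / (2 * ρ) * ∫ ω in E, g ω ∂ℙ ≤ ∫ ω, f ω ∂ℙ := by
    have hindint : Integrable (E.indicator (fun ω => lam / (2 * ρ) * g ω)) ℙ :=
      (hgint.const_mul _).indicator hE
    calc lam / (2 * ρ) * ∫ ω in E, g ω ∂ℙ
        = ∫ ω in E, lam / (2 * ρ) * g ω ∂ℙ := (MeasureTheory.integral_const_mul _ _).symm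
      _ = ∫ ω, E.indicator (fun ω => lam / (2 * ρ) * g ω) ω ∂ℙ :=
          (integral_indicator hE).symm
      _ ≤ ∫ ω, f ω ∂ℙ := integral_mono_ae hindint hfint hind
  -- combine
  have hgnonneg : 0 ≤ ∫ ω, g ω ∂ℙ :=
    integral_nonneg_of_ae (by filter_upwards [hgbd] with ω h using h.1)
  have hcc : lam / (4 * ρ) = lam / (2 * ρ) * (1 / 2) := by
    rw [div_mul_div_comm, mul_one]
    ring_nf
  calc lam / (4 * ρ) * ∫ ω, g ω ∂ℙ
      = lam / (2 * ρ) * ((1 / 2) * ∫ ω, g ω ∂ℙ) := by rw [hcc]; ring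
    _ ≤ lam / (2 * ρ) * ∫ ω in E, g ω ∂ℙ := mul_le_mul_of_nonneg_left hEhalf hc'
    _ ≤ ∫ ω, f ω ∂ℙ := hfa
end
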